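/- arXiv:1612.03358 — 7 statements merged into one kernel-verified Lean document; each statement's English description precedes it below -/
import Mathlib

section
/- Define groups E_n by E_1 = Aut(T_1) ≅ S_3 and, for n ≥ 2, E_n = (E_{n-1} ≀ Aut(T_1)) ∩ ker(sgn_2), where sgn_2 is the composition of restriction Aut(T_n) → Aut(T_2) with the sign of the permutation action on the 9 leaves of T_2. Then |E_n| = 2^{3^{n-1}} · 3^{(3^n - 1)/2} for all n ≥ 1. -/
open Equiv

/-- Leaves of the regular ternary rooted tree of height `n`. -/
def L : ℕ → Type
  | 0 => PUnit
  | n+1 => Fin 3 × L n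

instance Ldec : ∀ n, DecidableEq (L n)
  | 0 => inferInstanceAs (DecidableEq PUnit)
  | n+1 => letI := Ldec n; inferInstanceAs (DecidableEq (Fin 3 × L n))

instance Lfin : ∀ n, Fintype (L n)
  | 0 => inferInstanceAs (Fintype PUnit)
  | n+1 => letI := Lfin n; inferInstanceAs (Fintype (Fin 3 × L n))

/-- The wreath-product construction `G ≀ S_3` (as a type). -/
def W (G : Type) : Type := (Fin 3 → G) × Equiv.Perm (Fin 3)

instance Wgroup (G : Type) [Group G] : Group (W G) where
  mul x y := (fun i => x.1 (y.2 i) * y.1 i, x.2 * y.2)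
  one := (fun _ => 1, 1)
  inv x := (fun i => (x.1 (x.2⁻¹ i))⁻¹, x.2⁻¹)
  mul_assoc x y z := Prod.ext (funext fun i => mul_assoc _ _ _) (mul_assoc _ _ _)
  one_mul x := Prod.ext (funext fun i => one_mul _) (one_mul _)
  mul_one x := Prod.ext (funext fun i => mul_one _) (mul_one _)
  inv_mul_cancel x := Prod.ext (funext fun i => by
      show (x.1 (x.2⁻¹ (x.2 i)))⁻¹ * x.1 i = 1
      rw [show x.2⁻¹ (x.2 i) = i from x.2.symm_apply_apply i, inv_mul_cancel]) (inv_mul_cancel _)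

/-- `A n` is the automorphism group of the ternary rooted tree of height `n`,
realized as the `n`-fold iterated wreath product of `S_3 = Aut(T_1)`. -/
def A : ℕ → Type
  | 0 => PUnit
  | n+1 => W (A n)

instance Agroup : ∀ n, Group (A n)
  | 0 => inferInstanceAs (Group PUnit)
  | n+1 => @Wgroup (A n) (Agroup n)

/-- The faithful action of `A n` on the `3^n` leaves of the tree. -/
def toPerm : ∀ n, A n →* Equiv.Perm (L n)
  | 0 => 1
  | n+1 =>
    { toFun := fun x : W (A n) => Equiv.prodShear x.2 (fun i => toPerm n (x.1 i))
      map_one' := by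
        apply Equiv.ext
        intro l
        show ((1 : Equiv.Perm (Fin 3)) l.1, toPerm n (1 : A n) l.2) = l
        rw [map_one]
        exact Prod.ext rfl rfl
      map_mul' := by
        intro x y
        apply Equiv.ext
        intro l
        show ((x * y).2 l.1, toPerm n ((x * y).1 l.1) l.2)
          = (x.2 (y.2 l.1), toPerm n (x.1 (y.2 l.1)) ((toPerm n (y.1 l.1)) l.2))
        refine Prod.ext rfl ?_
        show toPerm n (x.1 (y.2 l.1) * y.1 l.1) l.2 = _
        rw [map_mul]
        rfl }

/-- Restriction `Aut(T_{n+1}) → Aut(T_n)` to the subtree spanned by the first `n` levels. -/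
def res : ∀ n, A (n+1) →* A n
  | 0 => 1
  | n+1 =>
    { toFun := fun x : W (A (n+1)) => ((fun i => res n (x.1 i), x.2) : W (A n))
      map_one' := Prod.ext (funext fun _ => map_one (res n)) rfl
      map_mul' := fun x y => Prod.ext (funext fun i => map_mul (res n) _ _) rfl }

/-- Restriction `Aut(T_{n+2}) → Aut(T_2)`. -/
def resTo2 : ∀ n, A (n+2) →* A 2
  | 0 => MonoidHom.id _
  | n+1 => (resTo2 n).comp (res (n+2))

/-- `sgn_2` : the sign of the permutation induced on the 9 leaves of `T_2`. -/
def sgn2 (n : ℕ) : A (n+2) →* ℤˣ :=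
  Equiv.Perm.sign.comp ((toPerm 2).comp (resTo2 n))

/-- Given a subgroup `H ≤ Aut(T_n)`, the subgroup of `Aut(T_{n+1})` consisting of elements
all of whose three level-1 components lie in `H` (the base of the wreath product `H ≀ S_3`). -/
def lift1 {n : ℕ} (Hn : Subgroup (A n)) : Subgroup (A (n+1)) where
  carrier := {x : W (A n) | ∀ i, x.1 i ∈ Hn}
  one_mem' := fun _ => Hn.one_mem
  mul_mem' := fun {x y} hx hy i => Hn.mul_mem (hx _) (hy _)
  inv_mem' := fun {x} hx i => Hn.inv_mem (hx _)

/-- The groups `E_n`: `E_1 = Aut(T_1)` and `E_n = (E_{n-1} ≀ Aut(T_1)) ∩ ker sgn_2`. -/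
def E : ∀ n, Subgroup (A n)
  | 0 => ⊤
  | 1 => ⊤
  | n+2 => lift1 (E (n+1)) ⊓ (sgn2 n).ker

/-- The projection onto the top (level-1) symmetric group component. -/
def sndHom (n : ℕ) : A (n+1) →* Equiv.Perm (Fin 3) where
  toFun := fun x : W (A n) => x.2
  map_one' := rfl
  map_mul' := fun _ _ => rfl

/-- The cyclic subgroup `C_3 ≤ S_3`. -/
def C3 : Subgroup (Equiv.Perm (Fin 3)) := Subgroup.zpowers (finRotate 3)

/-- The groups `H_n = [C_3]^n`, the iterated wreath product of cyclic groups of order 3. -/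
def Hgp : ∀ n, Subgroup (A n)
  | 0 => ⊤
  | n+1 => lift1 (Hgp n) ⊓ C3.comap (sndHom n)

/-- The elements `ν_n`: `ν_1 = (12)`, `ν_n = ((ν_{n-1},1,1),1)`. -/
def ν : ∀ n, A n
  | 0 => 1
  | 1 => ((fun _ => (1 : A 0), Equiv.swap 0 1) : W (A 0))
  | n+2 => ((fun i => if i = 0 then ν (n+1) else 1, 1) : W (A (n+1)))

/-- The elements `τ_n`: `τ_1 = (12)`, `τ_n = ((τ_{n-1},1,1),(12))`. -/
def τ : ∀ n, A n
  | 0 => 1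
  | 1 => ((fun _ => (1 : A 0), Equiv.swap 0 1) : W (A 0))
  | n+2 => ((fun i => if i = 0 then τ (n+1) else 1, Equiv.swap 0 1) : W (A (n+1)))

/-- Truncation of a leaf of `T_n` to the vertex at level `m` below it. -/
def take : ∀ (n m : ℕ), L n → L m
  | _, 0, _ => PUnit.unit
  | 0, m+1, _ => ((0, take 0 m PUnit.unit) : Fin 3 × L m)
  | n+1, m+1, l => ((l.1, take n m l.2) : Fin 3 × L m)

/-!
The restriction of `sgn_2` to `E_{n-1} ≀ S_3` is onto `{±1}`, witnessed by the element that swaps two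
level-one subtrees rigidly: on the nine leaves of `T_2` it is a product of three transpositions.
Hence `|E_n| · 2 = |E_{n-1}|³ · 6`, and the closed form follows by induction from `|E_1| = 6`.
-/

open Subgroup

theorem Subgroup.card_inf_ker_mul_card_map {G G' : Type*} [Group G] [Group G'] (K : Subgroup G)
    (f : G →* G') : Nat.card (K ⊓ f.ker : Subgroup G) * Nat.card (K.map f) = Nat.card K := by
  rw [← relIndex_ker, ← inf_relIndex_left, ← relIndex_bot_left, ← relIndex_bot_left,
    relIndex_mul_relIndex _ _ _ bot_le inf_le_left]

theorem card_lift1 {n : ℕ} (H : Subgroup (A n)) : Nat.card (lift1 H) = Nat.card H ^ 3 * 6 := by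
  let e : lift1 H ≃ (Fin 3 → H) × Perm (Fin 3) :=
    { toFun := fun x => (fun i => ⟨x.1.1 i, x.2 i⟩, x.1.2)
      invFun := fun p => ⟨((fun i => (p.1 i : A n)), p.2), fun i => (p.1 i).2⟩
      left_inv := fun _ => rfl
      right_inv := fun _ => rfl }
  rw [Nat.card_congr e, Nat.card_prod, Nat.card_fun, Nat.card_perm, Nat.card_fin]
  rfl

def swapTop (n : ℕ) : A (n+1) := ((fun _ => 1, swap 0 1) : W (A n))

theorem swapTop_mem_lift1 {n : ℕ} (H : Subgroup (A n)) : swapTop n ∈ lift1 H :=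
  fun _ => H.one_mem

theorem res_swapTop (n : ℕ) : res (n+1) (swapTop (n+1)) = swapTop n :=
  Prod.ext (funext fun _ => map_one (res n)) rfl

theorem resTo2_swapTop : ∀ n, resTo2 n (swapTop (n+1)) = swapTop 1
  | 0 => rfl
  | n+1 => (congrArg (resTo2 n) (res_swapTop (n+1))).trans (resTo2_swapTop n)

theorem sgn2_swapTop (n : ℕ) : sgn2 n (swapTop (n+1)) = -1 := by
  change Perm.sign (toPerm 2 (resTo2 n (swapTop (n+1)))) = -1
  rw [resTo2_swapTop]
  decide

theorem map_sgn2_lift1_E (n : ℕ) : (lift1 (E (n+1))).map (sgn2 n) = ⊤ := by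
  refine (eq_top_iff' _).mpr fun u => ?_
  rcases Int.units_eq_one_or u with rfl | rfl
  · exact one_mem _
  · exact ⟨swapTop (n+1), swapTop_mem_lift1 _, sgn2_swapTop n⟩

theorem card_E_one : Nat.card (E 1) = 6 := by
  have h : E 1 = lift1 (⊤ : Subgroup (A 0)) :=
    ((eq_top_iff' (lift1 ⊤)).mpr fun _ _ => mem_top _).symm
  rw [h, card_lift1, card_top, show Nat.card (A 0) = 1 from Nat.card_unique (α := PUnit)]
  rfl

theorem card_E_add_two_mul_two (n : ℕ) :
    Nat.card (E (n+2)) * 2 = Nat.card (E (n+1)) ^ 3 * 6 := by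
  rw [← card_lift1, ← (lift1 (E (n+1))).card_inf_ker_mul_card_map (sgn2 n), map_sgn2_lift1_E,
    card_top, Nat.card_eq_fintype_card (α := ℤˣ), Fintype.card_units_int]
  rfl

theorem card_E_succ (m : ℕ) :
    Nat.card (E (m+1)) = 2 ^ 3 ^ m * 3 ^ ((3 ^ (m+1) - 1) / 2) := by
  induction m with
  | zero => exact card_E_one
  | succ m ih =>
    have hodd : 3 ^ (m+1) % 2 = 1 := Nat.odd_iff.mp (Odd.pow (by decide))
    have hexp : (3 ^ (m+2) - 1) / 2 = 3 * ((3 ^ (m+1) - 1) / 2) + 1 := by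
      rw [pow_succ 3 (m+1)]; omega
    refine Nat.eq_of_mul_eq_mul_right two_pos ?_
    rw [card_E_add_two_mul_two, ih, hexp, pow_succ 3 m]
    ring

/-- `|E_n| = 2^{3^{n-1}} · 3^{(3^n - 1)/2}` for all `n ≥ 1`. -/
theorem card_E (n : ℕ) (hn : 1 ≤ n) :
    Nat.card (E n) = 2 ^ (3 ^ (n - 1)) * 3 ^ ((3 ^ n - 1) / 2) := by
  obtain ⟨m, rfl⟩ := Nat.exists_eq_add_of_le' hn
  exact card_E_succ m
end

section
/- For the polynomial f(z) = −2z³ + 3z², the discriminant of the degree-9 polynomial f(f(z)) − x, regarded as a polynomial in z over ℚ(x), equals [2^{16} · 3^9 · x²(x−1)²]². In particular it is a perfect square in ℚ[x]. -/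
/-!
The derivative of `p = f² - x` is `(f' ∘ f) · f' = 144 z³ (z - 1)³ (z - 3/2) (z + 1/2)`, which does
not involve `x`. If `p = a ∏ (z - rᵢ)` has degree `n`, then
`∏ₖ p'(rₖ) = aⁿ ∏_{i ≠ j} (rᵢ - rⱼ) = ± aⁿ ∏_{i < j} (rᵢ - rⱼ)²`, while evaluating the same
resultant through the roots `s` of `p'` gives `± cⁿ ∏ₛ p(s) / a^{n-1}`. As `f²` sends every critical
point to `0` or `1`, each `p(s)` is `-x` or `1 - x`, so the discriminant is a constant times
`x⁴ (x - 1)⁴`.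
-/

open Polynomial

/-- The polynomial `f(z) = -2z³ + 3z²` over `ℚ(x)`. -/
noncomputable def fpoly : Polynomial (RatFunc ℚ) := -2 * X ^ 3 + 3 * X ^ 2

/-- The degree-9 polynomial `f(f(z)) - x` over `ℚ(x)`. -/
noncomputable def p2 : Polynomial (RatFunc ℚ) := fpoly.comp fpoly - C RatFunc.X

open Finset

section RootProducts

variable {R : Type*} [CommRing R] {ι : Type*} [Fintype ι]

theorem prod_prod_erase_sub_eq [LinearOrder ι] (r : ι → R) :
    ∏ k, ∏ j ∈ univ.erase k, (r k - r j) =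
      (-1) ^ #(univ.filter fun q : ι × ι => q.1 < q.2) *
        ∏ q ∈ univ.filter (fun q : ι × ι => q.1 < q.2), (r q.1 - r q.2) ^ 2 := by
  have hoff : ∏ k, ∏ j ∈ univ.erase k, (r k - r j) =
      ∏ q ∈ univ.filter (fun q : ι × ι => q.1 ≠ q.2), (r q.1 - r q.2) := by
    rw [prod_filter, Fintype.prod_prod_type]
    refine prod_congr rfl fun k _ => ?_
    rw [← prod_filter, filter_ne]
  have hsplit : univ.filter (fun q : ι × ι => q.1 ≠ q.2) =
      univ.filter (fun q : ι × ι => q.1 < q.2) ∪ univ.filter (fun q : ι × ι => q.2 < q.1) := by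
    ext q; simp [lt_or_lt_iff_ne]
  have hdisj : Disjoint (univ.filter fun q : ι × ι => q.1 < q.2)
      (univ.filter fun q : ι × ι => q.2 < q.1) :=
    disjoint_filter.2 fun q _ h => h.not_gt
  have hswap : ∏ q ∈ univ.filter (fun q : ι × ι => q.2 < q.1), (r q.1 - r q.2) =
      ∏ q ∈ univ.filter (fun q : ι × ι => q.1 < q.2), -(r q.1 - r q.2) :=
    prod_nbij' Prod.swap Prod.swap (by simp) (by simp) (by simp) (by simp) (by simp)
  rw [hoff, hsplit, prod_union hdisj, hswap, prod_neg, mul_left_comm, ← prod_mul_distrib]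
  simp only [sq]

theorem prod_eval_derivative_eq_of_eq_C_mul_prod [LinearOrder ι] {p : R[X]} {a : R} {r : ι → R}
    (hp : p = C a * ∏ i, (X - C (r i))) :
    ∏ k, (derivative p).eval (r k) =
      a ^ Fintype.card ι * (-1) ^ #(univ.filter fun q : ι × ι => q.1 < q.2) *
        ∏ q ∈ univ.filter (fun q : ι × ι => q.1 < q.2), (r q.1 - r q.2) ^ 2 := by
  rw [mul_assoc, ← prod_prod_erase_sub_eq, hp, derivative_C_mul, ← card_univ, ← prod_const,
    ← prod_mul_distrib, ← Lagrange.nodal_eq]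
  simp only [eval_mul, eval_C, Lagrange.eval_nodal_derivative_eval_node_eq (mem_univ _),
    Lagrange.eval_nodal]

/-- The resultant of `p` and `q` computed through the roots of `p` (left) and of `q` (right). -/
theorem pow_card_mul_prod_eval_eq {p q : R[X]} {a c : R} {r : ι → R} {S : Multiset R}
    (hp : p = C a * ∏ i, (X - C (r i))) (hq : q = C c * (S.map (X - C ·)).prod) :
    a ^ Multiset.card S * ∏ i, q.eval (r i) =
      c ^ Fintype.card ι * (-1) ^ (Fintype.card ι * Multiset.card S) * (S.map p.eval).prod := by
  have hq_eval : ∀ i, q.eval (r i) = c * ((-1) ^ Multiset.card S * (S.map (· - r i)).prod) := by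
    intro i
    have hneg := Multiset.prod_map_neg (S.map (· - r i))
    simp only [Multiset.map_map, Function.comp_def, neg_sub, Multiset.card_map] at hneg
    simp [hq, eval_multiset_prod, Multiset.map_map, hneg]
  have hp_eval : (S.map p.eval).prod = a ^ Multiset.card S * ∏ i, (S.map (· - r i)).prod := by
    simp [hp, eval_prod, Multiset.prod_map_mul, Multiset.prod_map_prod]
  simp only [hq_eval, hp_eval, prod_mul_distrib, prod_const, card_univ, pow_mul]
  ring

end RootProducts

theorem natDegree_fpoly : fpoly.natDegree = 3 := by
  unfold fpoly; compute_degree!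

theorem leadingCoeff_fpoly : fpoly.leadingCoeff = -2 := by
  rw [leadingCoeff, natDegree_fpoly, fpoly]; simp

theorem leadingCoeff_p2 : p2.leadingCoeff = 16 := by
  have hcomp : (fpoly.comp fpoly).natDegree = 9 := by rw [natDegree_comp, natDegree_fpoly]
  rw [p2, leadingCoeff_sub_of_degree_lt, leadingCoeff_comp (by rw [natDegree_fpoly]; norm_num),
    leadingCoeff_fpoly, natDegree_fpoly]
  · norm_num
  · exact degree_C_le.trans_lt (natDegree_pos_iff_degree_pos.mp (by omega))

/-- The critical points of `f²` with multiplicity: `0` and `1` are simple roots of `f'` and double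
roots of `f` resp. `f - 1`, hence triple roots of `(f' ∘ f) · f'`; `3/2` and `-1/2` are the other
preimages of `0` and `1` under `f`. -/
noncomputable def p2CriticalPoints : Multiset (RatFunc ℚ) := {0, 0, 0, 1, 1, 1, 3 / 2, -1 / 2}

theorem derivative_p2 : derivative p2 = C 144 * (p2CriticalPoints.map (X - C ·)).prod := by
  rw [p2, derivative_sub, derivative_C, sub_zero, derivative_comp]
  refine Polynomial.funext fun z => ?_
  simp [fpoly, p2CriticalPoints]
  ring

theorem prod_eval_p2_criticalPoints :
    (p2CriticalPoints.map p2.eval).prod = RatFunc.X ^ 4 * (1 - RatFunc.X) ^ 4 := by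
  simp [p2, fpoly, p2CriticalPoints]
  ring

/-- The discriminant of `f²(z) - x` over `ℚ(x)`, computed as
`lc^{2·9-2} ∏_{i<j} (rᵢ - rⱼ)²` from any enumeration `r` of its 9 roots in an algebraic
closure of `ℚ(x)`, equals `[2^16 · 3^9 · x²(x-1)²]²`; in particular it is a square. -/
theorem disc_f2 (r : Fin 9 → AlgebraicClosure (RatFunc ℚ))
    (hr : (p2.map (algebraMap (RatFunc ℚ) (AlgebraicClosure (RatFunc ℚ)))).roots
      = Multiset.map r Finset.univ.val) :
    (algebraMap (RatFunc ℚ) (AlgebraicClosure (RatFunc ℚ)) p2.leadingCoeff) ^ (2 * 9 - 2) *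
      ∏ q ∈ Finset.univ.filter (fun q : Fin 9 × Fin 9 => q.1 < q.2), (r q.1 - r q.2) ^ 2
    = algebraMap (RatFunc ℚ) (AlgebraicClosure (RatFunc ℚ))
        ((2 ^ 16 * 3 ^ 9 * RatFunc.X ^ 2 * (RatFunc.X - 1) ^ 2) ^ 2) := by
  set φ := algebraMap (RatFunc ℚ) (AlgebraicClosure (RatFunc ℚ))
  have hsplit : p2.map φ = C (φ 16) * ∏ i, (X - C (r i)) := by
    have h := (IsAlgClosed.splits (p2.map φ)).eq_prod_roots
    rwa [leadingCoeff_map, leadingCoeff_p2, hr, Multiset.map_map, ← prod_eq_multiset_prod] at h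
  have hderiv : derivative (p2.map φ) =
      C (φ 144) * ((p2CriticalPoints.map φ).map (X - C ·)).prod := by
    simp [derivative_map, derivative_p2, Polynomial.map_multiset_prod, Multiset.map_map]
  have hcrit : ((p2CriticalPoints.map φ).map (p2.map φ).eval).prod =
      φ (RatFunc.X ^ 4 * (1 - RatFunc.X) ^ 4) := by
    simp [Multiset.map_map, ← prod_eval_p2_criticalPoints, map_multiset_prod]
  have hres := pow_card_mul_prod_eval_eq hsplit hderiv
  rw [prod_eval_derivative_eq_of_eq_C_mul_prod hsplit, hcrit] at hres
  have hpairs : #(univ.filter fun q : Fin 9 × Fin 9 => q.1 < q.2) = 36 := by decide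
  have hcrit_card : Multiset.card p2CriticalPoints = 8 := rfl
  simp only [Multiset.card_map, hcrit_card, Fintype.card_fin, hpairs, leadingCoeff_p2, map_pow,
    map_mul, map_sub, map_one, map_ofNat] at hres ⊢
  linear_combination hres / 16
end

section
/- Let K be a number field with a prime q lying over 3 such that v_q(x) = 1 for some x ∈ K. For f(z) = −2z³ + 3z², the polynomial f^n(z) − x is Eisenstein at q for every n ≥ 1; in particular, f^n(z) − x is irreducible over K for all n ≥ 1. -/
open Polynomial IsDedekindDomain WithZero

/-!
Write `f(z) = -2z³ + 3z² = z³ + 3(z² - z³)`. Since `a - b` divides `a³ - b³`, induction gives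
`fⁿ(z) ≡ z^(3ⁿ) (mod 3)` with integral coefficients, so modulo a prime `q ∣ 3` the polynomial
`fⁿ(z) - x` reduces to `z^(3ⁿ)`; its leading coefficient is a `q`-unit and all its other
coefficients lie in `q`. As `fⁿ(0) = 0`, its constant term is `-x`, of valuation exactly one.
This is the Eisenstein criterion over the valuation ring of `q`, and Gauss's lemma for this
valuation ring transports irreducibility to `K`.
-/

theorem Polynomial.isPrimitive_of_isUnit_leadingCoeff {R : Type*} [CommSemiring R] {p : R[X]}
    (h : IsUnit p.leadingCoeff) : p.IsPrimitive :=
  fun r hr => isUnit_of_dvd_unit ((C_dvd_iff_dvd_coeff r p).1 hr _) h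

theorem WithZero.le_exp_neg_one_of_lt_one {x : ℤᵐ⁰} (hx : x < 1) : x ≤ exp (-1) :=
  (lt_mul_exp_iff_le exp_ne_zero).1 (by rwa [← exp_add, neg_add_cancel, exp_zero])

section CubicMap

variable (R : Type*) [CommRing R]

noncomputable def cubicMap : R[X] := -2 * X ^ 3 + 3 * X ^ 2

noncomputable def cubicMapIter (n : ℕ) : R[X] := (cubicMap R).comp^[n] X

variable {R}

theorem cubicMapIter_succ (n : ℕ) :
    cubicMapIter R (n + 1) = (cubicMap R).comp (cubicMapIter R n) :=
  Function.iterate_succ_apply' _ _ _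

theorem map_cubicMapIter {S : Type*} [CommRing S] (φ : R →+* S) (n : ℕ) :
    (cubicMapIter R n).map φ = cubicMapIter S n := by
  induction n with
  | zero => exact map_X φ
  | succ n ih => simp [cubicMapIter_succ, cubicMap, ih]

theorem coeff_zero_cubicMapIter (n : ℕ) : (cubicMapIter R n).coeff 0 = 0 := by
  induction n with
  | zero => exact coeff_X_zero
  | succ n ih =>
    rw [coeff_zero_eq_eval_zero] at ih ⊢
    simp [cubicMapIter_succ, cubicMap, ih]

theorem natDegree_cubicMapIter_le (n : ℕ) : (cubicMapIter R n).natDegree ≤ 3 ^ n := by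
  induction n with
  | zero => exact natDegree_X_le
  | succ n ih =>
    have hf : (cubicMap R).natDegree ≤ 3 := by unfold cubicMap; compute_degree
    rw [cubicMapIter_succ, pow_succ']
    exact natDegree_comp_le.trans (Nat.mul_le_mul hf ih)

theorem three_dvd_cubicMapIter_sub_X_pow (n : ℕ) :
    (3 : R[X]) ∣ cubicMapIter R n - X ^ 3 ^ n := by
  induction n with
  | zero => simp [cubicMapIter]
  | succ n ih =>
    set g := cubicMapIter R n
    have key : cubicMapIter R (n + 1) - X ^ 3 ^ (n + 1)
        = (g ^ 3 - (X ^ 3 ^ n) ^ 3) + 3 * (g ^ 2 - g ^ 3) := by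
      rw [cubicMapIter_succ, pow_succ, pow_mul]
      simp only [cubicMap, add_comp, mul_comp, pow_comp, X_comp, ofNat_comp, neg_comp]
      ring
    rw [key]
    exact dvd_add (ih.trans (sub_dvd_pow_sub_pow _ _ 3)) (dvd_mul_right _ _)

end CubicMap

namespace Valuation

section

variable {K Γ₀ : Type*} [Field K] [LinearOrderedCommGroupWithZero Γ₀] (v : Valuation K Γ₀)

theorem mem_maximalIdeal_integer_iff {a : v.integer} :
    a ∈ IsLocalRing.maximalIdeal v.integer ↔ v a < 1 :=
  Integer.not_isUnit_iff_valuation_lt_one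

theorem exists_cubicMapIter_eq_X_pow_add (h3 : v 3 < 1) (n : ℕ) :
    ∃ H : K[X], cubicMapIter K n = X ^ 3 ^ n + H ∧ ∀ i, v (H.coeff i) < 1 := by
  obtain ⟨H, hH⟩ := three_dvd_cubicMapIter_sub_X_pow (R := v.integer) n
  refine ⟨(3 * H).map (algebraMap v.integer K), ?_, fun i => ?_⟩
  · rw [← map_cubicMapIter (algebraMap v.integer K), sub_eq_iff_eq_add'.1 hH]
    simp
  · rw [coeff_map, coeff_ofNat_mul, map_mul, v.map_mul]
    exact mul_lt_of_lt_of_le_one (by rwa [map_ofNat]) (H.coeff i).2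

theorem coeff_cubicMapIter_lt_one (h3 : v 3 < 1) {n i : ℕ} (hi : i ≠ 3 ^ n) :
    v ((cubicMapIter K n).coeff i) < 1 := by
  obtain ⟨H, hG, hH⟩ := v.exists_cubicMapIter_eq_X_pow_add h3 n
  simpa [hG, coeff_X_pow, hi] using hH i

theorem coeff_cubicMapIter_eq_one (h3 : v 3 < 1) (n : ℕ) :
    v ((cubicMapIter K n).coeff (3 ^ n)) = 1 := by
  obtain ⟨H, hG, hH⟩ := v.exists_cubicMapIter_eq_X_pow_add h3 n
  simpa [hG] using v.map_one_add_of_lt (hH (3 ^ n))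

theorem natDegree_cubicMapIter (h3 : v 3 < 1) (n : ℕ) :
    (cubicMapIter K n).natDegree = 3 ^ n :=
  natDegree_eq_of_le_of_coeff_ne_zero (natDegree_cubicMapIter_le n)
    (v.ne_zero_iff.1 (by simp [v.coeff_cubicMapIter_eq_one h3 n]))

end

section

variable {K : Type*} [Field K] (v : Valuation K ℤᵐ⁰)

theorem sq_maximalIdeal_integer_le :
    IsLocalRing.maximalIdeal v.integer ^ 2 ≤ v.leIdeal (exp (-2)) := by
  rw [sq, Ideal.mul_le]
  intro a ha b hb
  rw [mem_maximalIdeal_integer_iff] at ha hb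
  calc v ((a * b : v.integer) : K) = v a * v b := v.map_mul _ _
    _ ≤ exp (-1) * exp (-1) :=
      mul_le_mul' (le_exp_neg_one_of_lt_one ha) (le_exp_neg_one_of_lt_one hb)
    _ = exp (-2) := by rw [← exp_add]; norm_num

theorem notMem_sq_maximalIdeal_integer {a : v.integer} (ha : v a = exp (-1)) :
    a ∉ IsLocalRing.maximalIdeal v.integer ^ 2 := fun h => by
  have : exp (-1 : ℤ) ≤ exp (-2) := ha ▸ v.sq_maximalIdeal_integer_le h
  simp only [exp_le_exp] at this
  omega

theorem irreducible_of_eisenstein {p : K[X]} (hlead : v p.leadingCoeff = 1)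
    (hlow : ∀ i < p.natDegree, v (p.coeff i) < 1) (hzero : v (p.coeff 0) = exp (-1)) :
    Irreducible p := by
  have hint (i : ℕ) : v (p.coeff i) ≤ 1 := by
    rcases lt_trichotomy i p.natDegree with hi | rfl | hi
    · exact (hlow i hi).le
    · exact hlead.le
    · simp [coeff_eq_zero_of_natDegree_lt hi]
  obtain ⟨P, rfl⟩ : p ∈ lifts (algebraMap v.integer K) :=
    (lifts_iff_coeff_lifts p).2 fun i => ⟨⟨_, hint i⟩, rfl⟩
  have hinj : Function.Injective (algebraMap v.integer K) := Subtype.val_injective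
  simp only [coe_mapRingHom, natDegree_map_eq_of_injective hinj, leadingCoeff_map_of_injective hinj,
    coeff_map] at hlead hlow hzero
  have hunit : IsUnit P.leadingCoeff := (Integers.isUnit_iff_valuation_eq_one
    (integer.integers v)).2 hlead
  have hdeg : 0 < P.natDegree := by
    by_contra! h
    rw [leadingCoeff, Nat.le_zero.1 h, hzero] at hlead
    simp at hlead
  have hEis : P.IsEisensteinAt (IsLocalRing.maximalIdeal v.integer) :=
    ⟨fun h => h hunit, fun hi => (v.mem_maximalIdeal_integer_iff).2 (hlow _ hi),
      v.notMem_sq_maximalIdeal_integer hzero⟩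
  have hprim := isPrimitive_of_isUnit_leadingCoeff hunit
  exact hprim.irreducible_iff_irreducible_map_fraction_map.1
    (hEis.irreducible (IsLocalRing.maximalIdeal.isMaximal _).isPrime hprim hdeg)

end

end Valuation

theorem eisenstein_irreducible_general (K : Type*) [Field K] [NumberField K]
    (q : HeightOneSpectrum (NumberField.RingOfIntegers K))
    (hq3 : (3 : NumberField.RingOfIntegers K) ∈ q.asIdeal)
    (x : K) (hx : q.valuation K x = (Multiplicative.ofAdd (-1 : ℤ) : Multiplicative ℤ))
    (n : ℕ) :
    let p : Polynomial K :=
      (fun g => (-2 * X ^ 3 + 3 * X ^ 2 : Polynomial K).comp g)^[n] X - C x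
    q.valuation K ((p.leadingCoeff : K)) = 1 ∧
    (∀ i < p.natDegree, q.valuation K (p.coeff i) < 1) ∧
    q.valuation K (p.coeff 0) = (Multiplicative.ofAdd (-1 : ℤ) : Multiplicative ℤ) ∧
    Irreducible p := by
  intro p
  have hp : p = cubicMapIter K n - C x := rfl
  set v := q.valuation K
  have h3 : v 3 < 1 := by
    rw [← map_ofNat (algebraMap (NumberField.RingOfIntegers K) K) 3]
    exact (q.valuation_lt_one_iff_mem 3).2 hq3
  have hcoeff {i : ℕ} (hi : i ≠ 0) : p.coeff i = (cubicMapIter K n).coeff i := by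
    simp [hp, coeff_C, hi]
  have hdeg : p.natDegree = 3 ^ n := hp ▸ natDegree_sub_C.trans (v.natDegree_cubicMapIter h3 n)
  have hlead : v p.leadingCoeff = 1 := by
    rw [leadingCoeff, hdeg, hcoeff (by positivity)]
    exact v.coeff_cubicMapIter_eq_one h3 n
  have hzero : v (p.coeff 0) = exp (-1) := by simp [hp, coeff_zero_cubicMapIter, hx, exp]
  have hlow : ∀ i < p.natDegree, v (p.coeff i) < 1 := by
    rintro (_ | i) hi
    · rw [hzero, ← exp_zero, exp_lt_exp]
      decide
    · rw [hcoeff i.succ_ne_zero]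
      exact v.coeff_cubicMapIter_lt_one h3 (by omega)
  exact ⟨hlead, hlow, hzero, v.irreducible_of_eisenstein hlead hlow hzero⟩

/-- If `K` is a number field, `q` a prime of `K` over `3`, and `x ∈ K` with
`v_q(x) = 1`, then for every `n ≥ 1` the polynomial `fⁿ(z) - x` (where `f(z) = -2z³+3z²`)
is Eisenstein at `q` — its leading coefficient is a `q`-unit, all lower coefficients have
positive `q`-valuation, and the constant term has `v_q = 1` — and is irreducible over `K`. -/
theorem eisenstein_irreducible (K : Type*) [Field K] [NumberField K]
    (q : HeightOneSpectrum (NumberField.RingOfIntegers K))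
    (hq3 : (3 : NumberField.RingOfIntegers K) ∈ q.asIdeal)
    (x : K) (hx : q.valuation K x = (Multiplicative.ofAdd (-1 : ℤ) : Multiplicative ℤ))
    (n : ℕ) (hn : 1 ≤ n) :
    let p : Polynomial K :=
      (fun g => (-2 * X ^ 3 + 3 * X ^ 2 : Polynomial K).comp g)^[n] X - C x
    q.valuation K ((p.leadingCoeff : K)) = 1 ∧
    (∀ i < p.natDegree, q.valuation K (p.coeff i) < 1) ∧
    q.valuation K (p.coeff 0) = (Multiplicative.ofAdd (-1 : ℤ) : Multiplicative ℤ) ∧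
    Irreducible p :=
  eisenstein_irreducible_general K q hq3 x hx n
end

section
/- Let N(z) = 2z²/(3z² − 1) be the Newton map of g(z) = z³ − z, and let η(z) = 1/(1 − 2z). Then η^{-1} ∘ N ∘ η (z) = −2z³ + 3z² as rational functions, i.e., the Newton map of z³ − z is Möbius-conjugate to the polynomial f(z) = −2z³ + 3z². -/
/-! With `u = 1 - 2z` one has `η z = 1/u` and `N (1/u) = 2 / (u (3 - u²))`, so
`η⁻¹ (N (η z)) = (2 - 3u + u³) / 4`, which is `3z² - 2z³` after substituting `u = 1 - 2z`.
In `RatFunc ℚ` the denominators `1 - 2X` and `3 - (1 - 2X)²` are nonzero because they are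
nonzero at `X = 0`. -/

open Polynomial

section NewtonConjugacy

variable {K : Type*} [Field K]

def newtonMapCubic (w : K) : K := 2 * w ^ 3 / (3 * w ^ 2 - 1)

def mobiusEta (z : K) : K := 1 / (1 - 2 * z)

def mobiusEtaInv (w : K) : K := (w - 1) / (2 * w)

theorem mobiusEtaInv_mobiusEta (h2 : (2 : K) ≠ 0) {z : K} (hz : 1 - 2 * z ≠ 0) :
    mobiusEtaInv (mobiusEta z) = z := by
  unfold mobiusEtaInv mobiusEta
  field_simp
  ring

theorem mobiusEtaInv_newtonMapCubic_mobiusEta (h2 : (2 : K) ≠ 0) {z : K} (hz : 1 - 2 * z ≠ 0)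
    (hc : 3 - (1 - 2 * z) ^ 2 ≠ 0) :
    mobiusEtaInv (newtonMapCubic (mobiusEta z)) = -2 * z ^ 3 + 3 * z ^ 2 := by
  unfold mobiusEtaInv newtonMapCubic mobiusEta
  have hden : 3 * (1 / (1 - 2 * z)) ^ 2 - 1 ≠ 0 := by
    rw [show 3 * (1 / (1 - 2 * z)) ^ 2 - 1 = (3 - (1 - 2 * z) ^ 2) / (1 - 2 * z) ^ 2 by
      field_simp]
    exact div_ne_zero hc (pow_ne_zero 2 hz)
  field_simp
  ring

end NewtonConjugacy

theorem RatFunc.algebraMap_ne_zero_of_eval_zero_ne_zero {K : Type*} [Field K] {p : K[X]}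
    (hp : p.eval 0 ≠ 0) : algebraMap K[X] (RatFunc K) p ≠ 0 :=
  RatFunc.algebraMap_ne_zero fun h => hp (by simp [h])

/-- The Newton map `N(z) = 2z³/(3z²-1)` of `g(z) = z³ - z` is conjugate,
via the Möbius transformation `η(z) = 1/(1-2z)` (with inverse `η⁻¹(w) = (w-1)/(2w)`), to
the polynomial `f(z) = -2z³ + 3z²`: as rational functions, `η⁻¹ ∘ N ∘ η = f`. -/
theorem newton_conjugate :
    let N : RatFunc ℚ → RatFunc ℚ := fun w => 2 * w ^ 3 / (3 * w ^ 2 - 1)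
    let η : RatFunc ℚ → RatFunc ℚ := fun z => 1 / (1 - 2 * z)
    let ηinv : RatFunc ℚ → RatFunc ℚ := fun w => (w - 1) / (2 * w)
    ηinv (η RatFunc.X) = RatFunc.X ∧
    ηinv (N (η RatFunc.X)) = -2 * RatFunc.X ^ 3 + 3 * RatFunc.X ^ 2 := by
  intro N η ηinv
  have h2 : (2 : RatFunc ℚ) ≠ 0 := two_ne_zero
  have hz : (1 - 2 * RatFunc.X : RatFunc ℚ) ≠ 0 := by
    have := RatFunc.algebraMap_ne_zero_of_eval_zero_ne_zero (p := 1 - 2 * (X : ℚ[X])) (by simp)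
    rwa [map_sub, map_mul, map_one, map_ofNat, RatFunc.algebraMap_X] at this
  have hc : (3 - (1 - 2 * RatFunc.X) ^ 2 : RatFunc ℚ) ≠ 0 := by
    have := RatFunc.algebraMap_ne_zero_of_eval_zero_ne_zero
      (p := 3 - (1 - 2 * (X : ℚ[X])) ^ 2) (by norm_num)
    rwa [map_sub, map_pow, map_sub, map_mul, map_one, map_ofNat, map_ofNat,
      RatFunc.algebraMap_X] at this
  exact ⟨mobiusEtaInv_mobiusEta h2 hz, mobiusEtaInv_newtonMapCubic_mobiusEta h2 hz hc⟩
end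

section
/- Let φ(t) = t − t²/2 + t³/3. Then φ is strictly increasing on (0,1), and the iterates satisfy φ^n(1) = (2/n)(1 + O(log n / n)) as n → ∞. More precisely, 1/φ^n(1) = n/2 + O(log n). -/
/-!
Conjugating by `t ↦ 1/t` turns `φ` into `ψ(z) = 1/φ(1/z) = z + 1/2 - R(z)` with
`0 ≤ R(z) ≤ 1/(3z)`, so the orbit `zₙ = ψⁿ(1) = 1/φⁿ(1)` grows by at most `1/2` per step.
Since `R ≤ 3/10` on `[1, ∞)`, it also grows by at least `1/5`, so `zₙ ≥ (n+5)/5` and the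
`n`-th step loses at most `5/(3(n+5))` against `1/2`; these losses telescope against
`log (n+4)`, whence `|zₙ - n/2| = O(log n)`. Inverting gives the estimate for `φⁿ(1)`.
-/

open Real

noncomputable section

namespace PhiIterates

def phi (t : ℝ) : ℝ := t - t ^ 2 / 2 + t ^ 3 / 3

def psi (z : ℝ) : ℝ := (phi z⁻¹)⁻¹

def R (z : ℝ) : ℝ := (z + 2) / (2 * (6 * z ^ 2 - 3 * z + 2))

theorem strictMono_phi : StrictMono phi := by
  intro x y hxy
  -- the quadratic factor attains its minimum `3/4` at `x = y = 1/2`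
  have hq : 0 < 1 - (x + y) / 2 + (x ^ 2 + x * y + y ^ 2) / 3 := by
    nlinarith [sq_nonneg (x + y - 1), sq_nonneg (x - y)]
  have hfactor : phi y - phi x = (y - x) * (1 - (x + y) / 2 + (x ^ 2 + x * y + y ^ 2) / 3) := by
    unfold phi; ring
  linarith [mul_pos (sub_pos.2 hxy) hq]

theorem iterate_phi_inv (n : ℕ) (z : ℝ) : phi^[n] z⁻¹ = (psi^[n] z)⁻¹ := by
  have hconj : Function.Semiconj Inv.inv psi phi := fun z => by simp only [psi, inv_inv]
  exact (hconj.iterate_right n z).symm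

theorem R_denom_pos (z : ℝ) : 0 < 6 * z ^ 2 - 3 * z + 2 := by
  nlinarith [sq_nonneg (4 * z - 1)]

theorem psi_eq (z : ℝ) (hz : z ≠ 0) : psi z = z + 1 / 2 - R z := by
  have hD := (R_denom_pos z).ne'
  have hphi : phi z⁻¹ = (6 * z ^ 2 - 3 * z + 2) / (6 * z ^ 3) := by
    unfold phi; field_simp; ring
  rw [psi, hphi, inv_div, R, eq_sub_iff_add_eq, div_add_div _ _ hD (by positivity),
    div_eq_iff (by positivity)]
  ring

theorem R_nonneg {z : ℝ} (hz : 0 ≤ z) : 0 ≤ R z := by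
  have := R_denom_pos z
  unfold R; positivity

theorem R_le_inv_three_mul {z : ℝ} (hz : 0 < z) : R z ≤ (3 * z)⁻¹ := by
  have := R_denom_pos z
  rw [R, ← one_div, div_le_div_iff₀ (by positivity) (by positivity)]
  nlinarith [sq_nonneg (3 * z - 2)]

theorem R_le_of_one_le {z : ℝ} (hz : 1 ≤ z) : R z ≤ 3 / 10 := by
  have := R_denom_pos z
  rw [R, div_le_div_iff₀ (by positivity) (by norm_num)]
  nlinarith

theorem psi_le {z : ℝ} (hz : 0 < z) : psi z ≤ z + 1 / 2 := by
  rw [psi_eq z hz.ne']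
  linarith [R_nonneg hz.le]

theorem le_psi {z : ℝ} (hz : 0 < z) : z + 1 / 2 - (3 * z)⁻¹ ≤ psi z := by
  rw [psi_eq z hz.ne']
  linarith [R_le_inv_three_mul hz]

theorem add_fifth_le_psi {z : ℝ} (hz : 1 ≤ z) : z + 1 / 5 ≤ psi z := by
  rw [psi_eq z (by positivity)]
  linarith [R_le_of_one_le hz]

theorem inv_add_one_le_log_sub_log {a : ℝ} (ha : 0 < a) :
    (a + 1)⁻¹ ≤ log (a + 1) - log a := by
  have h := one_sub_inv_le_log_of_pos (show 0 < (a + 1) / a by positivity)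
  rw [log_div (by positivity) ha.ne', inv_div] at h
  have hsimp : 1 - a / (a + 1) = (a + 1)⁻¹ := by field_simp; ring
  linarith

theorem iterate_psi_one_ge (n : ℕ) : ((n : ℝ) + 5) / 5 ≤ psi^[n] 1 := by
  induction n with
  | zero => norm_num
  | succ n ih =>
    rw [Function.iterate_succ_apply']
    have := add_fifth_le_psi (le_trans (by linarith [n.cast_nonneg (α := ℝ)]) ih)
    push_cast
    linarith

theorem iterate_psi_one_pos (n : ℕ) : 0 < psi^[n] 1 :=
  lt_of_lt_of_le (by positivity) (iterate_psi_one_ge n)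

theorem iterate_psi_one_le (n : ℕ) : psi^[n] 1 ≤ 1 + (n : ℝ) / 2 := by
  induction n with
  | zero => norm_num
  | succ n ih =>
    rw [Function.iterate_succ_apply']
    have := psi_le (iterate_psi_one_pos n)
    push_cast
    linarith

theorem iterate_psi_one_ge_log (n : ℕ) :
    1 + (n : ℝ) / 2 - 5 / 3 * (log ((n : ℝ) + 4) - log 4) ≤ psi^[n] 1 := by
  induction n with
  | zero => norm_num
  | succ n ih =>
    rw [Function.iterate_succ_apply']
    have hn : (0 : ℝ) ≤ n := n.cast_nonneg
    have hz := iterate_psi_one_pos n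
    have hloss : (3 * psi^[n] 1)⁻¹ ≤ 5 / 3 * ((n : ℝ) + 4 + 1)⁻¹ := by
      rw [← one_div, ← div_eq_mul_inv, div_le_div_iff₀ (by positivity) (by positivity)]
      linarith [iterate_psi_one_ge n]
    have hgap := inv_add_one_le_log_sub_log (show (0 : ℝ) < n + 4 by positivity)
    have hstep := le_psi hz
    push_cast
    rw [show (n : ℝ) + 1 + 4 = n + 4 + 1 by ring]
    nlinarith

theorem abs_iterate_psi_one_sub_le {n : ℕ} (hn : 2 ≤ n) :
    |psi^[n] 1 - (n : ℝ) / 2| ≤ 2 * log n := by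
  have hn2 : (2 : ℝ) ≤ n := by exact_mod_cast hn
  have hlog2 : log 2 ≤ log n := log_le_log (by norm_num) hn2
  have hlog4 : log ((n : ℝ) + 4) - log 4 ≤ log n := by
    rw [← log_div (by positivity) (by norm_num)]
    exact log_le_log (by positivity) (by linarith)
  have := log_two_gt_d9
  have := iterate_psi_one_le n
  have := iterate_psi_one_ge_log n
  rw [abs_le]
  constructor <;> nlinarith

theorem abs_inv_sub_two_div_le {z x ε : ℝ} (hx : 0 < x) (hzx : x / 5 ≤ z)
    (h : |z - x / 2| ≤ ε) : |z⁻¹ - 2 / x| ≤ 20 * ε / x ^ 2 := by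
  have hz : 0 < z := by linarith
  have hε : 0 ≤ ε := (abs_nonneg _).trans h
  rw [show 2 / x = (x / 2)⁻¹ by rw [inv_div], ← Real.dist_eq,
    dist_inv_inv₀ hz.ne' (by positivity), Real.dist_eq, Real.norm_of_nonneg hz.le,
    Real.norm_of_nonneg (by positivity), div_le_div_iff₀ (by positivity) (by positivity)]
  calc |z - x / 2| * x ^ 2 ≤ ε * x ^ 2 := by gcongr
    _ ≤ 20 * ε * (z * (x / 2)) := by nlinarith [mul_nonneg hε hx.le]

end PhiIterates

end

open PhiIterates in
/-- `φ(t) = t - t²/2 + t³/3` is strictly increasing on `(0,1)`, and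
`φⁿ(1) = (2/n)(1 + O(log n / n))`; more precisely `1/φⁿ(1) = n/2 + O(log n)`. -/
theorem phi_iterates :
    let φ : ℝ → ℝ := fun t => t - t ^ 2 / 2 + t ^ 3 / 3
    StrictMonoOn φ (Set.Ioo 0 1) ∧
    (∃ C : ℝ, ∀ n : ℕ, 2 ≤ n → |φ^[n] 1 - 2 / (n : ℝ)| ≤ C * Real.log n / (n : ℝ) ^ 2) ∧
    (∃ C : ℝ, ∀ n : ℕ, 2 ≤ n → |1 / φ^[n] 1 - (n : ℝ) / 2| ≤ C * Real.log n) := by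
  intro φ
  have hφ (n : ℕ) : φ^[n] 1 = (psi^[n] 1)⁻¹ := by
    have h := iterate_phi_inv n 1
    rwa [inv_one] at h
  refine ⟨strictMono_phi.strictMonoOn _, ⟨40, fun n hn => ?_⟩, ⟨2, fun n hn => ?_⟩⟩
  · have hzn : (n : ℝ) / 5 ≤ psi^[n] 1 := by linarith [iterate_psi_one_ge n]
    rw [hφ]
    exact (abs_inv_sub_two_div_le (by positivity) hzn (abs_iterate_psi_one_sub_le hn)).trans_eq
      (by ring)
  · rw [hφ, one_div, inv_inv]
    exact abs_iterate_psi_one_sub_le hn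
end

section
/- Let ψ(z) = z + 1/2 − (z+2)/(2(6z² − 3z + 2)). Then for all n ≥ 1, ψ^n(1) ≥ (n+5)/5. -/
/-! On `[1, ∞)` the correction term `(z + 2) / (2 (6z² - 3z + 2))` is at most its value `3/10`
at `z = 1`, so `ψ` raises every `z ≥ 1` by at least `1/5`; iterating from `1` gives the bound. -/

lemma add_nsmul_le_iterate {α : Type*} [AddCommMonoid α] [PartialOrder α]
    [IsOrderedAddMonoid α] {f : α → α} {a c : α} (hc : 0 ≤ c) (hf : ∀ z, a ≤ z → z + c ≤ f z)
    (n : ℕ) : a + n • c ≤ f^[n] a := by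
  induction n with
  | zero => simp
  | succ n ih =>
    have ha : a ≤ f^[n] a := le_trans (le_add_of_nonneg_right (nsmul_nonneg hc n)) ih
    calc a + (n + 1) • c = (a + n • c) + c := by rw [succ_nsmul, add_assoc]
      _ ≤ f^[n] a + c := add_le_add_left ih c
      _ ≤ f^[n + 1] a := by rw [Function.iterate_succ_apply']; exact hf _ ha

lemma div_quadratic_le_three_tenths {z : ℝ} (hz : 1 ≤ z) :
    (z + 2) / (2 * (6 * z ^ 2 - 3 * z + 2)) ≤ 3 / 10 := by
  rw [div_le_iff₀ (by nlinarith)]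
  nlinarith

theorem psi_iterates_general (n : ℕ) :
    let ψ : ℝ → ℝ := fun z => z + 1 / 2 - (z + 2) / (2 * (6 * z ^ 2 - 3 * z + 2))
    ((n : ℝ) + 5) / 5 ≤ ψ^[n] 1 := by
  intro ψ
  have hstep : ∀ z, 1 ≤ z → z + 1 / 5 ≤ ψ z := fun z hz => by
    have := div_quadratic_le_three_tenths hz
    simp only [ψ]
    linarith
  have h := add_nsmul_le_iterate (by norm_num) hstep n
  rw [nsmul_eq_mul] at h
  linarith

/-- For `ψ(z) = z + 1/2 - (z+2)/(2(6z² - 3z + 2))`, the iterates satisfy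
`ψⁿ(1) ≥ (n+5)/5` for all `n ≥ 1`. -/
theorem psi_iterates (n : ℕ) (hn : 1 ≤ n) :
    let ψ : ℝ → ℝ := fun z => z + 1 / 2 - (z + 2) / (2 * (6 * z ^ 2 - 3 * z + 2))
    ((n : ℝ) + 5) / 5 ≤ ψ^[n] 1 :=
  psi_iterates_general n
end

section
/- Let E_{n,fix} denote the set of elements of E_n fixing at least one leaf of T_n, and set x_n = |E_{n,fix}|/|E_n|. Then for all n ≥ 1, ρ(x_n) ≤ x_{n+1} ≤ φ(x_n), where ρ(t) = t − t²/2 and φ(t) = t − t²/2 + t³/3. Consequently x_n = (2/n)(1 + O(log n/n)) as n → ∞; in particular, the proportion of elements of E_n fixing a leaf of T_n tends to 0 as n → ∞. -/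
open Equiv

/-- The proportion `x_n = |E_{n,fix}|/|E_n|` of elements of `E_n` fixing at least one
leaf of `T_n`. -/
noncomputable def xprop (n : ℕ) : ℝ :=
  (Nat.card {s : A n // s ∈ E n ∧ ∃ l : L n, toPerm n s l = l} : ℝ) / (Nat.card (E n) : ℝ)

/-!
Let `T`, `F` be the numbers of elements of `E_n` (`n ≥ 1`) and of those fixing a leaf, and `D`
the number of leaf-fixing elements counted with the sign of their root permutation. An element
`(g, σ)` of `A_{n+1}` lies in `E_{n+1}` iff every `g_i ∈ E_n` and `sgn σ · ∏ sgn(root g_i) = 1`,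
and it fixes no leaf iff no branch `g_i` with `σ i = i` fixes one. Writing the indicator of the
sign condition as `(1 + sgn σ · ∏ sgn(root g_i)) / 2` turns every count over `E_{n+1}` into a sum
over `σ ∈ S_3` of products of counts over `E_n`, i.e. into the cycle index of `S_3`. This shows
that `|E_{n+1}| = 3 |E_n|³`, that the root sign is balanced on `E_n`, and that
`x_{n+1} = x - x²/2 + (x³ + d³)/6` with `x = x_n = F/T` and `d = D/T`, `|d| ≤ x`; the sandwich
follows. Along the sandwich `1/x_n` grows by `1/2 + O(x_n)` per step and `x_n ≤ 4/(n+5)`, so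
`1/x_n = n/2 + O(log n)`.
-/

open Finset

theorem Equiv.Perm.sign_prodShear {α β : Type*} [DecidableEq α] [DecidableEq β] [Fintype α]
    [Fintype β] (σ : Perm α) (F : α → Perm β) :
    Perm.sign (prodShear σ F) = Perm.sign σ ^ Fintype.card β * ∏ a, Perm.sign (F a) := by
  have : (prodShear σ F : Perm (α × β)) = prodCongr σ (Equiv.refl β) * prodCongrRight F := rfl
  rw [this, map_mul, prodCongr_refl_right, Perm.sign_prodCongrLeft, Perm.sign_prodCongrRight,
    prod_const, card_univ, mul_comm]

lemma Equiv.Perm.sum_fin_three {M : Type*} [AddCommMonoid M] (f : Perm (Fin 3) → M) :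
    ∑ σ, f σ = f 1 + f (swap 0 1) + f (swap 0 2) + f (swap 1 2) + f (finRotate 3) +
      f (finRotate 3)⁻¹ := by
  rw [show (univ : Finset (Perm (Fin 3))) =
      {1, swap 0 1, swap 0 2, swap 1 2, finRotate 3, (finRotate 3)⁻¹} from by decide]
  simp +decide [sum_insert, add_assoc]

section CycleIndex

variable {R : Type*} [CommRing R] (a b : R)

lemma Equiv.Perm.sum_fin_three_prod_ite_fixed :
    ∑ σ : Perm (Fin 3), ∏ i, (if σ i = i then a else b) =
      a ^ 3 + 3 * a * b ^ 2 + 2 * b ^ 3 := by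
  simp +decide [Perm.sum_fin_three, Fin.prod_univ_three]
  ring

lemma Equiv.Perm.sum_fin_three_sign_mul_prod_ite_fixed :
    ∑ σ : Perm (Fin 3), ((Perm.sign σ : ℤ) : R) * ∏ i, (if σ i = i then a else b) =
      a ^ 3 - 3 * a * b ^ 2 + 2 * b ^ 3 := by
  simp +decide [Perm.sum_fin_three, Fin.prod_univ_three]
  ring

end CycleIndex

lemma two_mul_ite_units_eq_one (u : ℤˣ) : 2 * (if u = 1 then 1 else 0 : ℤ) = 1 + u := by
  rcases Int.units_eq_one_or u with rfl | rfl <;> decide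

lemma sandwich_of_abs_le {x d : ℝ} (hd : |d| ≤ x) :
    x - x ^ 2 / 2 ≤ x - x ^ 2 / 2 + (x ^ 3 + d ^ 3) / 6 ∧
      x - x ^ 2 / 2 + (x ^ 3 + d ^ 3) / 6 ≤ x - x ^ 2 / 2 + x ^ 3 / 3 := by
  have hodd : Odd 3 := by decide
  obtain ⟨hlow, hup⟩ := abs_le.1 hd
  have h1 := hodd.pow_le_pow.2 hlow
  have h2 := hodd.pow_le_pow.2 hup
  rw [hodd.neg_pow] at h1
  constructor <;> linarith

lemma sandwich_step_bounds {x x' : ℝ} (hx : 0 < x) (hx23 : x ≤ 2 / 3)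
    (hlow : x - x ^ 2 / 2 ≤ x') (hup : x' ≤ x - x ^ 2 / 2 + x ^ 3 / 3) :
    0 < x' ∧ x' ≤ 2 / 3 ∧ |1 / x' - 1 / x - 1 / 2| ≤ 3 / 8 * x := by
  have hx' : 0 < x' := (by nlinarith : 0 < x - x ^ 2 / 2).trans_le hlow
  refine ⟨hx', by nlinarith, abs_le.2 ⟨?_, ?_⟩⟩
  · have key : (1 / x + 1 / 2 - 3 / 8 * x) * (x - x ^ 2 / 2 + x ^ 3 / 3) ≤ 1 := by
      field_simp
      nlinarith [mul_nonneg (mul_nonneg hx.le hx.le) (by linarith : (0:ℝ) ≤ 2 - 3 * x),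
        pow_pos hx 4]
    have : (1 / x + 1 / 2 - 3 / 8 * x) * x' ≤ 1 :=
      (mul_le_mul_of_nonneg_left hup (by nlinarith [one_div_pos.2 hx])).trans key
    have : 1 / x + 1 / 2 - 3 / 8 * x ≤ 1 / x' := by rw [le_div_iff₀ hx']; linarith
    linarith
  · have key : 1 ≤ (1 / x + 1 / 2 + 3 / 8 * x) * (x - x ^ 2 / 2) := by
      field_simp
      nlinarith [mul_nonneg (mul_nonneg hx.le hx.le) (by linarith : (0:ℝ) ≤ 2 - 3 * x)]
    have : 1 ≤ (1 / x + 1 / 2 + 3 / 8 * x) * x' :=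
      key.trans (mul_le_mul_of_nonneg_left hlow (by positivity))
    have : 1 / x' ≤ 1 / x + 1 / 2 + 3 / 8 * x := by rw [div_le_iff₀ hx']; linarith
    linarith

lemma one_div_succ_le_log_succ_sub_log {n : ℝ} (hn : 0 < n) :
    1 / (n + 1) ≤ Real.log (n + 1) - Real.log n := by
  have h := Real.one_sub_inv_le_log_of_pos (show 0 < (n + 1) / n by positivity)
  rw [Real.log_div (by positivity) hn.ne', inv_div] at h
  calc 1 / (n + 1) = 1 - n / (n + 1) := by field_simp; ring
    _ ≤ _ := h

section Asymptotics

variable {x : ℕ → ℝ} (hx1 : x 1 = 2 / 3)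
  (hstep : ∀ n : ℕ, 1 ≤ n →
    x n - x n ^ 2 / 2 ≤ x (n+1) ∧ x (n+1) ≤ x n - x n ^ 2 / 2 + x n ^ 3 / 3)
include hx1 hstep

lemma pos_and_le_of_sandwich {n : ℕ} (hn : 1 ≤ n) : 0 < x n ∧ x n ≤ 2 / 3 := by
  induction n, hn using Nat.le_induction with
  | base => rw [hx1]; norm_num
  | succ n hn ih =>
    obtain ⟨hpos, hle, -⟩ := sandwich_step_bounds ih.1 ih.2 (hstep n hn).1 (hstep n hn).2
    exact ⟨hpos, hle⟩

lemma le_one_div_of_sandwich {n : ℕ} (hn : 1 ≤ n) : ((n : ℝ) + 5) / 4 ≤ 1 / x n := by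
  induction n, hn using Nat.le_induction with
  | base => rw [hx1]; norm_num
  | succ n hn ih =>
    obtain ⟨hpos, hle⟩ := pos_and_le_of_sandwich hx1 hstep hn
    have h := (abs_le.1 (sandwich_step_bounds hpos hle (hstep n hn).1 (hstep n hn).2).2.2).1
    push_cast
    linarith

lemma le_four_div_of_sandwich {n : ℕ} (hn : 1 ≤ n) : x n ≤ 4 / ((n : ℝ) + 5) := by
  have h := le_one_div_of_sandwich hx1 hstep hn
  have hpos := (pos_and_le_of_sandwich hx1 hstep hn).1
  rw [div_le_div_iff₀ (by positivity) hpos] at h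
  rw [le_div_iff₀ (by positivity)]
  linarith

lemma abs_one_div_sub_le_log_of_sandwich {n : ℕ} (hn : 1 ≤ n) :
    |1 / x n - ((n : ℝ) / 2 + 1)| ≤ 3 / 2 * Real.log n := by
  induction n, hn using Nat.le_induction with
  | base => rw [hx1]; norm_num
  | succ n hn ih =>
    obtain ⟨hpos, hle⟩ := pos_and_le_of_sandwich hx1 hstep hn
    have hstep' := (sandwich_step_bounds hpos hle (hstep n hn).1 (hstep n hn).2).2.2
    have hn' : (0 : ℝ) < n := by exact_mod_cast hn
    have hsmall : 3 / 8 * x n ≤ 3 / 2 * (1 / ((n : ℝ) + 1)) := by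
      have := le_four_div_of_sandwich hx1 hstep hn
      rw [mul_one_div, le_div_iff₀ (by positivity)]
      rw [le_div_iff₀ (by positivity)] at this
      nlinarith
    have hlog := one_div_succ_le_log_succ_sub_log hn'
    calc |1 / x (n+1) - (((n+1 : ℕ) : ℝ) / 2 + 1)|
        = |(1 / x (n+1) - 1 / x n - 1 / 2) + (1 / x n - ((n : ℝ) / 2 + 1))| := by
          push_cast; ring_nf
      _ ≤ 3 / 8 * x n + 3 / 2 * Real.log n := (abs_add_le _ _).trans (add_le_add hstep' ih)
      _ ≤ 3 / 2 * Real.log ((n+1 : ℕ) : ℝ) := by push_cast; linarith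

lemma abs_sub_two_div_le_of_sandwich {n : ℕ} (hn : 2 ≤ n) :
    |x n - 2 / (n : ℝ)| ≤ 24 * Real.log n / (n : ℝ) ^ 2 := by
  have hn1 : 1 ≤ n := by omega
  have hpos := (pos_and_le_of_sandwich hx1 hstep hn1).1
  have hy := le_one_div_of_sandwich hx1 hstep hn1
  have hdev := abs_one_div_sub_le_log_of_sandwich hx1 hstep hn1
  have hN : (2 : ℝ) ≤ n := by exact_mod_cast hn
  have hlog : 2 / 3 ≤ Real.log n := by
    linarith [Real.log_two_gt_d9, Real.log_le_log (by norm_num) hN]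
  set y := 1 / x n
  have hxy : x n = 1 / y := by rw [one_div_one_div]
  have hyn : 0 < y * n := by positivity
  calc |x n - 2 / (n : ℝ)| = 2 * |((n : ℝ) / 2 + 1) - y - 1| / (y * n) := by
        rw [hxy, div_sub_div _ _ (by positivity) (by positivity), abs_div, abs_of_pos hyn,
          ← abs_two, ← abs_mul]
        congr 2
        ring
    _ ≤ 2 * (3 / 2 * Real.log n + 1) / (((n : ℝ) + 5) / 4 * n) := by
        gcongr
        exact (abs_sub _ _).trans (by rw [abs_sub_comm, abs_one]; linarith)
    _ ≤ 24 * Real.log n / (n : ℝ) ^ 2 := by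
        rw [div_le_div_iff₀ (by positivity) (by positivity)]
        nlinarith [mul_nonneg (sq_nonneg (n : ℝ)) (Real.log_nonneg (by linarith : (1:ℝ) ≤ n))]

lemma tendsto_zero_of_sandwich : Filter.Tendsto x Filter.atTop (nhds 0) := by
  refine squeeze_zero' (Filter.eventually_atTop.2 ⟨1, fun n hn =>
      (pos_and_le_of_sandwich hx1 hstep hn).1.le⟩)
    (Filter.eventually_atTop.2 ⟨1, fun n hn => ?_⟩) (tendsto_const_div_atTop_nhds_zero_nat 4)
  exact (le_four_div_of_sandwich hx1 hstep hn).trans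
    (div_le_div_of_nonneg_left (by norm_num) (by exact_mod_cast hn) (by linarith))

end Asymptotics

instance Adec : ∀ n, DecidableEq (A n)
  | 0 => inferInstanceAs (DecidableEq PUnit)
  | n+1 => letI := Adec n; inferInstanceAs (DecidableEq ((Fin 3 → A n) × Perm (Fin 3)))

instance Afin : ∀ n, Fintype (A n)
  | 0 => inferInstanceAs (Fintype PUnit)
  | n+1 => letI := Afin n; letI := Adec n
      inferInstanceAs (Fintype ((Fin 3 → A n) × Perm (Fin 3)))

def topSign (n : ℕ) : A (n+1) →* ℤˣ := Perm.sign.comp (sndHom n)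

lemma sign_toPerm_one (x : A 1) : Perm.sign (toPerm 1 x) = topSign 0 x := by
  change Perm.sign (prodShear (x : W (A 0)).2 fun i => toPerm 0 ((x : W (A 0)).1 i)) = _
  rw [Perm.sign_prodShear, show Fintype.card (L 0) = 1 from rfl, pow_one]
  simp only [show ∀ y : A 0, toPerm 0 y = 1 from fun _ => rfl, map_one, prod_const_one, mul_one]
  rfl

lemma sgn2_eq (n : ℕ) (x : A (n+2)) :
    sgn2 n x = topSign (n+1) x * ∏ i, topSign n ((x : W (A (n+1))).1 i) := by
  induction n with
  | zero =>
    change Perm.sign (prodShear (x : W (A 1)).2 fun i => toPerm 1 ((x : W (A 1)).1 i)) = _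
    rw [Perm.sign_prodShear, show Fintype.card (L 1) = 3 from rfl, pow_succ, Int.units_sq,
      one_mul]
    simp only [sign_toPerm_one]
    rfl
  | succ n ih => exact ih (res (n+2) x)

lemma mem_E_succ_succ {n : ℕ} (x : A (n+2)) :
    x ∈ E (n+2) ↔ (∀ i, (x : W (A (n+1))).1 i ∈ E (n+1)) ∧
      Perm.sign (x : W (A (n+1))).2 * ∏ i, topSign n ((x : W (A (n+1))).1 i) = 1 := by
  rw [show E (n+2) = lift1 (E (n+1)) ⊓ (sgn2 n).ker from rfl, Subgroup.mem_inf,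
    MonoidHom.mem_ker, sgn2_eq]
  rfl

instance Emem : ∀ n, DecidablePred (· ∈ E n)
  | 0 => fun x => .isTrue (Subgroup.mem_top x)
  | 1 => fun x => .isTrue (Subgroup.mem_top x)
  | n+2 => fun x =>
      letI := Emem (n+1)
      decidable_of_iff _ (mem_E_succ_succ x).symm

def HasFixedLeaf (n : ℕ) (x : A n) : Prop := ∃ l, toPerm n x l = l

instance (n : ℕ) : DecidablePred (HasFixedLeaf n) :=
  fun x => inferInstanceAs (Decidable (∃ l, toPerm n x l = l))

lemma hasFixedLeaf_succ {n : ℕ} (x : A (n+1)) :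
    HasFixedLeaf (n+1) x ↔ ∃ i, (x : W (A n)).2 i = i ∧ HasFixedLeaf n ((x : W (A n)).1 i) :=
  ⟨fun ⟨⟨i, l⟩, h⟩ => ⟨i, congrArg Prod.fst h, l, congrArg Prod.snd h⟩,
    fun ⟨i, hi, l, hl⟩ => ⟨⟨i, l⟩, Prod.ext hi hl⟩⟩

def count (n : ℕ) (P : A n → Prop) [DecidablePred P] : ℤ :=
  ∑ x, if x ∈ E n ∧ P x then 1 else 0

def signedCount (n : ℕ) (P : A (n+1) → Prop) [DecidablePred P] : ℤ :=
  ∑ x, if x ∈ E (n+1) ∧ P x then (topSign n x : ℤ) else 0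

section Wreath

variable {n : ℕ} (Q : Fin 3 → A (n+1) → Prop) [∀ i, DecidablePred (Q i)]

lemma two_mul_ite_mem_E_succ_succ (x : A (n+2)) :
    2 * (if x ∈ E (n+2) ∧ ∀ i, Q i ((x : W (A (n+1))).1 i) then 1 else 0 : ℤ) =
      ∏ i, (if (x : W (A (n+1))).1 i ∈ E (n+1) ∧ Q i ((x : W (A (n+1))).1 i) then 1 else 0) +
      Perm.sign (x : W (A (n+1))).2 * ∏ i,
        (if (x : W (A (n+1))).1 i ∈ E (n+1) ∧ Q i ((x : W (A (n+1))).1 i) then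
          (topSign n ((x : W (A (n+1))).1 i) : ℤ) else 0) := by
  set g := (x : W (A (n+1))).1
  by_cases hg : ∀ i, g i ∈ E (n+1) ∧ Q i (g i)
  · have hx : (x ∈ E (n+2) ∧ ∀ i, Q i (g i)) ↔
        Perm.sign (x : W (A (n+1))).2 * ∏ i, topSign n (g i) = 1 := by
      rw [mem_E_succ_succ]
      exact ⟨fun h => h.1.2, fun h => ⟨⟨fun i => (hg i).1, h⟩, fun i => (hg i).2⟩⟩
    rw [if_congr hx rfl rfl, two_mul_ite_units_eq_one, prod_congr rfl fun i _ => if_pos (hg i),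
      prod_congr rfl fun i _ => if_pos (hg i), prod_const_one, Units.val_mul, Units.coe_prod]
  · obtain ⟨i, hi⟩ := not_forall.1 hg
    rw [prod_eq_zero (mem_univ i) (if_neg hi), prod_eq_zero (mem_univ i) (if_neg hi),
      if_neg fun h => hi ⟨((mem_E_succ_succ x).1 h.1).1 i, h.2 i⟩]
    simp

lemma two_mul_sum_mem_E_succ_succ (c : Perm (Fin 3) → ℤ)
    (Q : Perm (Fin 3) → Fin 3 → A (n+1) → Prop) [∀ σ i, DecidablePred (Q σ i)] :
    2 * ∑ x : A (n+2), (if x ∈ E (n+2) ∧ ∀ i, Q (x : W (A (n+1))).2 i ((x : W (A (n+1))).1 i)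
      then c (x : W (A (n+1))).2 else 0) =
    ∑ σ, c σ * (∏ i, count (n+1) (Q σ i) + Perm.sign σ * ∏ i, signedCount n (Q σ i)) := by
  have hfactor : ∀ (p : Prop) [Decidable p] (σ : Perm (Fin 3)),
      2 * (if p then c σ else 0) = c σ * (2 * if p then 1 else 0) := by
    intros; split_ifs <;> ring
  simp only [mul_sum, hfactor, two_mul_ite_mem_E_succ_succ]
  rw [show ∀ f : A (n+2) → ℤ, ∑ x, f x = ∑ σ : Perm (Fin 3), ∑ g : Fin 3 → A (n+1), f (g, σ)
    from fun f => Fintype.sum_prod_type_right (f := f)]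
  refine sum_congr rfl fun σ _ => ?_
  simp only [count, signedCount, prod_univ_sum, Fintype.piFinset_univ, ← mul_sum,
    sum_add_distrib]

end Wreath

section Counting

variable {n : ℕ}

lemma count_congr {P P' : A n → Prop} [DecidablePred P] [DecidablePred P']
    (h : ∀ x, P x ↔ P' x) : count n P = count n P' := by
  simp only [count, h]

lemma signedCount_congr {P P' : A (n+1) → Prop} [DecidablePred P] [DecidablePred P']
    (h : ∀ x, P x ↔ P' x) : signedCount n P = signedCount n P' := by
  simp only [signedCount, h]

lemma count_imp_eq_ite (p : Prop) [Decidable p] (P : A n → Prop) [DecidablePred P] :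
    count n (fun x => p → P x) = if p then count n P else count n (fun _ => True) := by
  split_ifs with hp <;> exact count_congr (by simp [hp])

lemma signedCount_imp_eq_ite (p : Prop) [Decidable p] (P : A (n+1) → Prop) [DecidablePred P] :
    signedCount n (fun x => p → P x) =
      if p then signedCount n P else signedCount n (fun _ => True) := by
  split_ifs with hp <;> exact signedCount_congr (by simp [hp])

lemma count_add_count_not (P : A n → Prop) [DecidablePred P] :
    count n P + count n (fun x => ¬P x) = count n (fun _ => True) := by
  simp only [count, ← sum_add_distrib]
  refine sum_congr rfl fun x _ => ?_
  by_cases hx : x ∈ E n <;> by_cases hP : P x <;> simp [hx, hP]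

lemma signedCount_add_signedCount_not (P : A (n+1) → Prop) [DecidablePred P] :
    signedCount n P + signedCount n (fun x => ¬P x) = signedCount n (fun _ => True) := by
  simp only [signedCount, ← sum_add_distrib]
  refine sum_congr rfl fun x _ => ?_
  by_cases hx : x ∈ E (n+1) <;> by_cases hP : P x <;> simp [hx, hP]

lemma abs_signedCount_le (P : A (n+1) → Prop) [DecidablePred P] :
    |signedCount n P| ≤ count (n+1) P :=
  (abs_sum_le_sum_abs _ _).trans <| sum_le_sum fun x _ => by
    split_ifs <;> simp [Int.abs_eq_natAbs]

lemma count_true_pos : 0 < count n (fun _ => True) :=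
  calc (0 : ℤ) < if (1 : A n) ∈ E n ∧ True then 1 else 0 := by simp [(E n).one_mem]
    _ ≤ count n (fun _ => True) :=
      single_le_sum (f := fun x : A n => if x ∈ E n ∧ True then (1 : ℤ) else 0)
        (fun x _ => by positivity) (mem_univ 1)

section Recursion

variable (P : A (n+1) → Prop) [DecidablePred P] {P' : A (n+2) → Prop} [DecidablePred P']
  (hP' : ∀ x, P' x ↔ ∀ i, (x : W (A (n+1))).2 i = i → P ((x : W (A (n+1))).1 i))
include hP'

lemma two_mul_count_succ_succ :
    2 * count (n+2) P' =
      count (n+1) P ^ 3 + 3 * count (n+1) P * count (n+1) (fun _ => True) ^ 2 +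
        2 * count (n+1) (fun _ => True) ^ 3 + signedCount n P ^ 3 -
        3 * signedCount n P * signedCount n (fun _ => True) ^ 2 +
        2 * signedCount n (fun _ => True) ^ 3 := by
  rw [count_congr hP']
  refine (two_mul_sum_mem_E_succ_succ (fun _ => 1) fun σ i x => σ i = i → P x).trans ?_
  simp only [count_imp_eq_ite, signedCount_imp_eq_ite, one_mul, sum_add_distrib,
    Perm.sum_fin_three_prod_ite_fixed]
  have hsign := Perm.sum_fin_three_sign_mul_prod_ite_fixed (signedCount n P)
    (signedCount n fun _ => True)
  simp only [Int.cast_id] at hsign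
  rw [hsign]
  ring

lemma two_mul_signedCount_succ :
    2 * signedCount (n+1) P' =
      count (n+1) P ^ 3 - 3 * count (n+1) P * count (n+1) (fun _ => True) ^ 2 +
        2 * count (n+1) (fun _ => True) ^ 3 + signedCount n P ^ 3 +
        3 * signedCount n P * signedCount n (fun _ => True) ^ 2 +
        2 * signedCount n (fun _ => True) ^ 3 := by
  rw [signedCount_congr hP']
  refine (two_mul_sum_mem_E_succ_succ (fun σ => Perm.sign σ)
    fun σ i x => σ i = i → P x).trans ?_
  have hsq : ∀ σ : Perm (Fin 3), ((Perm.sign σ : ℤˣ) : ℤ) * Perm.sign σ = 1 := fun σ => by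
    rw [← Units.val_mul, Int.units_mul_self, Units.val_one]
  simp only [count_imp_eq_ite, signedCount_imp_eq_ite, mul_add, ← mul_assoc, hsq, one_mul,
    sum_add_distrib, Perm.sum_fin_three_prod_ite_fixed]
  have hsign := Perm.sum_fin_three_sign_mul_prod_ite_fixed (count (n+1) P)
    (count (n+1) fun _ => True)
  simp only [Int.cast_id] at hsign
  rw [hsign]
  ring

end Recursion

lemma count_succ_succ_true :
    count (n+2) (fun _ => True) = 3 * count (n+1) (fun _ => True) ^ 3 := by
  have h := two_mul_count_succ_succ (n := n) (fun _ => True) (P' := fun _ => True) (by simp)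
  linarith

lemma signedCount_true_eq_zero : ∀ n, signedCount n (fun _ => True) = 0
  | 0 => by decide
  | n+1 => by
    have h := two_mul_signedCount_succ (n := n) (fun _ => True) (P' := fun _ => True) (by simp)
    rw [signedCount_true_eq_zero n] at h
    linarith

end Counting

lemma two_mul_count_hasFixedLeaf_succ_succ (n : ℕ) :
    2 * count (n+2) (HasFixedLeaf (n+2)) =
      6 * count (n+1) (fun _ => True) ^ 2 * count (n+1) (HasFixedLeaf (n+1)) -
        3 * count (n+1) (fun _ => True) * count (n+1) (HasFixedLeaf (n+1)) ^ 2 +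
        count (n+1) (HasFixedLeaf (n+1)) ^ 3 + signedCount n (HasFixedLeaf (n+1)) ^ 3 := by
  have hrec := two_mul_count_succ_succ (fun y => ¬HasFixedLeaf (n+1) y)
    (P' := fun x => ¬HasFixedLeaf (n+2) x) fun x => by simp [hasFixedLeaf_succ]
  have hfree : count (n+1) (fun y => ¬HasFixedLeaf (n+1) y) =
      count (n+1) (fun _ => True) - count (n+1) (HasFixedLeaf (n+1)) := by
    linarith [count_add_count_not (HasFixedLeaf (n+1))]
  have hfree' : count (n+2) (fun x => ¬HasFixedLeaf (n+2) x) =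
      3 * count (n+1) (fun _ => True) ^ 3 - count (n+2) (HasFixedLeaf (n+2)) := by
    linarith [count_add_count_not (HasFixedLeaf (n+2)), count_succ_succ_true (n := n)]
  have hsigned : signedCount n (fun y => ¬HasFixedLeaf (n+1) y) =
      -signedCount n (HasFixedLeaf (n+1)) := by
    linarith [signedCount_add_signedCount_not (HasFixedLeaf (n+1)), signedCount_true_eq_zero n]
  rw [hfree, hfree', hsigned, signedCount_true_eq_zero] at hrec
  linear_combination -hrec

lemma count_eq_natCard {n : ℕ} (P : A n → Prop) [DecidablePred P] :
    count n P = Nat.card {x : A n // x ∈ E n ∧ P x} := by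
  rw [count, sum_boole, Nat.card_eq_fintype_card, Fintype.card_subtype]

lemma xprop_eq (n : ℕ) :
    xprop n = (count n (HasFixedLeaf n) : ℝ) / count n (fun _ => True) := by
  rw [xprop, count_eq_natCard, count_eq_natCard, Int.cast_natCast, Int.cast_natCast,
    Nat.card_congr (Equiv.subtypeEquivRight fun x => (and_true (x ∈ E n)).to_iff)]
  rfl

lemma xprop_succ_succ (n : ℕ) : ∃ d, |d| ≤ xprop (n+1) ∧
    xprop (n+2) = xprop (n+1) - xprop (n+1) ^ 2 / 2 + (xprop (n+1) ^ 3 + d ^ 3) / 6 := by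
  have hT : (0 : ℝ) < count (n+1) (fun _ => True) := by exact_mod_cast count_true_pos
  refine ⟨signedCount n (HasFixedLeaf (n+1)) / count (n+1) (fun _ => True), ?_, ?_⟩
  · rw [xprop_eq, abs_div, abs_of_pos hT]
    gcongr
    exact_mod_cast abs_signedCount_le _
  · have hfix := congrArg (Int.cast : ℤ → ℝ) (two_mul_count_hasFixedLeaf_succ_succ n)
    push_cast at hfix
    rw [xprop_eq, xprop_eq, count_succ_succ_true]
    push_cast
    field_simp
    linear_combination 6 * hfix

lemma xprop_sandwich {n : ℕ} (hn : 1 ≤ n) :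
    xprop n - xprop n ^ 2 / 2 ≤ xprop (n+1) ∧
      xprop (n+1) ≤ xprop n - xprop n ^ 2 / 2 + xprop n ^ 3 / 3 := by
  obtain ⟨k, rfl⟩ := Nat.exists_eq_add_of_le' hn
  obtain ⟨d, hd, hrec⟩ := xprop_succ_succ k
  rw [hrec]
  exact sandwich_of_abs_le hd

lemma count_one_hasFixedLeaf : count 1 (HasFixedLeaf 1) = 4 := by decide

lemma count_one_true : count 1 (fun _ => True) = 6 := by decide

lemma xprop_one : xprop 1 = 2 / 3 := by
  rw [xprop_eq, count_one_hasFixedLeaf, count_one_true]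
  norm_num

/-- `ρ(x_n) ≤ x_{n+1} ≤ φ(x_n)` for all `n ≥ 1`, where `ρ(t) = t - t²/2`
and `φ(t) = t - t²/2 + t³/3`; consequently `x_n = (2/n)(1 + O(log n/n))`, and in
particular the proportion of elements of `E_n` fixing a leaf tends to `0`. -/
theorem fixed_leaf_proportion :
    (∀ n : ℕ, 1 ≤ n →
      xprop n - (xprop n) ^ 2 / 2 ≤ xprop (n+1) ∧
      xprop (n+1) ≤ xprop n - (xprop n) ^ 2 / 2 + (xprop n) ^ 3 / 3) ∧
    (∃ C : ℝ, ∀ n : ℕ, 2 ≤ n →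
      |xprop n - 2 / (n : ℝ)| ≤ C * Real.log n / (n : ℝ) ^ 2) ∧
    Filter.Tendsto xprop Filter.atTop (nhds 0) :=
  ⟨fun _ => xprop_sandwich,
    ⟨24, fun _ => abs_sub_two_div_le_of_sandwich xprop_one fun _ => xprop_sandwich⟩,
    tendsto_zero_of_sandwich xprop_one fun _ => xprop_sandwich⟩
end
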